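/- arXiv:2409.01084 — 3 statements merged into one kernel-verified Lean document; each statement's English description precedes it below -/
import Mathlib

section
/- Let Γ be a finite group acting on L ≅ ℤ^ℓ via ρ : Γ → GL(L), and let χ_i be an irreducible character. The quasi-polynomial m(χ_i; q) (the multiplicity of χ_i in the permutation character of Γ on L/qL) has the gcd-property with period ñ = lcm{ e_{γ,r(γ)} : γ ∈ Γ }, i.e., m(χ_i; q) depends on q only through gcd(ñ, q) and deg-ℓ polynomial data; specifically, its constituent for residue r modulo ñ depends only on gcd(ñ, r). -/
/-- Number of fixed points of the matrix `M` acting on row vectors of `(ℤ/qℤ)^ℓ`. -/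
noncomputable def fixCard {ℓ : ℕ} (M : Matrix (Fin ℓ) (Fin ℓ) ℤ) (q : ℕ) : ℕ :=
  Nat.card {x : Fin ℓ → ZMod q // Matrix.vecMul x (M.map (Int.cast : ℤ → ZMod q)) = x}

lemma card_ann (q : ℕ) (hq : q ≠ 0) (c : ℕ) :
    Nat.card {t : ZMod q // t * (c : ZMod q) = 0} = Nat.gcd q c := by
  haveI : NeZero q := ⟨hq⟩
  set f : ZMod q →+ ZMod q := AddMonoidHom.mulRight (c : ZMod q) with hf
  have h1 : Nat.card {t : ZMod q // t * (c : ZMod q) = 0} = Nat.card f.ker := rfl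
  have hrange : f.range = AddSubgroup.zmultiples (c : ZMod q) := by
    ext x
    simp only [AddMonoidHom.mem_range, AddSubgroup.mem_zmultiples_iff]
    constructor
    · rintro ⟨t, rfl⟩
      exact ⟨t.val, by simp [hf, ZMod.intCast_cast, zsmul_eq_mul]⟩
    · rintro ⟨z, rfl⟩
      exact ⟨(z : ZMod q), by simp [hf, zsmul_eq_mul]⟩
  have hcr : Nat.card f.range = q / Nat.gcd q c := by
    rw [hrange, Nat.card_zmultiples, ZMod.addOrderOf_coe c hq]
  have htot : Nat.card (ZMod q) = Nat.card f.ker * Nat.card f.range := by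
    rw [← Nat.card_congr (QuotientAddGroup.quotientKerEquivRange f).toEquiv,
      AddSubgroup.card_eq_card_quotient_mul_card_addSubgroup (s := f.ker)]
    ring
  have hZ : Nat.card (ZMod q) = q := by simp [Nat.card_eq_fintype_card]
  have hgd : Nat.gcd q c ∣ q := Nat.gcd_dvd_left q c
  have hne : 0 < q / Nat.gcd q c :=
    Nat.div_pos (Nat.le_of_dvd (Nat.pos_of_ne_zero hq) hgd) (Nat.pos_of_ne_zero (Nat.gcd_ne_zero_left hq))
  rw [h1]
  rw [hZ, hcr] at htot
  have hk : q / (q / Nat.gcd q c) = Nat.card f.ker :=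
    Nat.div_eq_of_eq_mul_left hne htot
  rw [← hk, Nat.div_div_self hgd hq]

lemma fixCard_eq {ℓ : ℕ} (q : ℕ) (hq : q ≠ 0) (M S T : Matrix (Fin ℓ) (Fin ℓ) ℤ)
    (hS : IsUnit S.det) (hT : IsUnit T.det) (d : Fin ℓ → ℤ) (hd : ∀ i, 0 ≤ d i)
    (hSNF : S * (M - 1) * T = Matrix.diagonal d) :
    fixCard M q = ∏ i, Nat.gcd q (d i).toNat := by
  haveI : NeZero q := ⟨hq⟩
  set φ := Int.castRingHom (ZMod q) with hφ
  set S' := S.map φ with hS'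
  set T' := T.map φ with hT'
  set M' := M.map φ with hM'
  have hSu : IsUnit S'.det := by have := hS.map φ; rwa [RingHom.map_det] at this
  have hTu : IsUnit T'.det := by have := hT.map φ; rwa [RingHom.map_det] at this
  haveI := S'.invertibleOfIsUnitDet hSu
  haveI := T'.invertibleOfIsUnitDet hTu
  set D : Matrix (Fin ℓ) (Fin ℓ) (ZMod q) := Matrix.diagonal (fun i => ((d i : ZMod q))) with hD
  have hmap1 : (M - 1).map φ = M' - 1 := by
    ext i j
    simp [Matrix.map_apply, Matrix.sub_apply, Matrix.one_apply, apply_ite φ, hM']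
  have hSNF' : S' * (M' - 1) * T' = D := by
    have := congrArg φ.mapMatrix hSNF
    simp only [RingHom.mapMatrix_apply, Matrix.map_mul] at this
    rw [hmap1] at this
    rw [this, hD]
    ext i j
    by_cases h : i = j <;> simp [Matrix.diagonal, Matrix.map_apply, Matrix.of_apply, h]
  have e1 : {x : Fin ℓ → ZMod q // Matrix.vecMul x (M.map (Int.cast : ℤ → ZMod q)) = x}
      ≃ {x : Fin ℓ → ZMod q // Matrix.vecMul x (M' - 1) = 0} := by
    apply Equiv.subtypeEquivRight
    intro x
    rw [Matrix.vecMul_sub, Matrix.vecMul_one, sub_eq_zero]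
    exact ⟨fun h => h, fun h => h⟩
  have e2 : {x : Fin ℓ → ZMod q // Matrix.vecMul x (M' - 1) = 0}
      ≃ {z : Fin ℓ → ZMod q // Matrix.vecMul z D = 0} := by
    refine ⟨fun x => ⟨Matrix.vecMul x.1 (⅟S'), ?_⟩, fun z => ⟨Matrix.vecMul z.1 S', ?_⟩, ?_, ?_⟩
    · have hx : Matrix.vecMul (Matrix.vecMul x.1 (⅟S')) S' = x.1 := by
        rw [Matrix.vecMul_vecMul, invOf_mul_self, Matrix.vecMul_one]
      simp only [← hSNF', ← Matrix.vecMul_vecMul]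
      rw [hx, x.2, Matrix.zero_vecMul]
    · have hT1 : Matrix.vecMul z.1 (D * ⅟T') = 0 := by
        rw [← Matrix.vecMul_vecMul, z.2, Matrix.zero_vecMul]
      have hD2 : D * ⅟T' = S' * (M' - 1) := by
        rw [← hSNF', Matrix.mul_assoc, mul_invOf_self, Matrix.mul_one]
      rw [Matrix.vecMul_vecMul, ← hD2]
      exact hT1
    · intro x; ext1
      show Matrix.vecMul (Matrix.vecMul x.1 (⅟S')) S' = x.1
      rw [Matrix.vecMul_vecMul, invOf_mul_self, Matrix.vecMul_one]
    · intro z; ext1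
      show Matrix.vecMul (Matrix.vecMul z.1 S') (⅟S') = z.1
      rw [Matrix.vecMul_vecMul, mul_invOf_self, Matrix.vecMul_one]
  have e3 : {z : Fin ℓ → ZMod q // Matrix.vecMul z D = 0}
      ≃ ∀ i : Fin ℓ, {t : ZMod q // t * (((d i).toNat : ℕ) : ZMod q) = 0} := by
    refine (Equiv.subtypeEquivRight ?_).trans (Equiv.subtypePiEquivPi)
    intro z
    rw [funext_iff]
    apply forall_congr'
    intro i
    rw [hD, Matrix.vecMul_diagonal]
    have hcast : ((d i : ZMod q)) = (((d i).toNat : ℕ) : ZMod q) := by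
      rw [← Int.toNat_of_nonneg (hd i)]; push_cast
      rw [Int.toNat_of_nonneg (hd i)]
    rw [hcast]
    simp [Pi.zero_apply]
  rw [fixCard, Nat.card_congr (e1.trans (e2.trans e3)), Nat.card_pi]
  exact Finset.prod_congr rfl fun i _ => card_ann q hq _

/-- The multiplicity quasi-polynomial `m(χ_i; q)` has the
gcd-property with period `ñ = lcm { e_{γ, r(γ)} : γ ∈ Γ }`: there are
polynomial constituents depending only on `gcd(ñ, q)`. Here `e γ` is the
largest elementary divisor of `R_γ - I` (equal to `1` if `r γ = 0`). -/
theorem stmt7 (ℓ : ℕ) (Γ : Type) [Group Γ] [Fintype Γ]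
    (ρ : Γ →* Matrix.GeneralLinearGroup (Fin ℓ) ℤ) (hρ : Function.Injective ρ)
    (V : FDRep ℂ Γ) (hV : CategoryTheory.Simple V)
    (r : Γ → ℕ) (hr : ∀ γ, r γ ≤ ℓ)
    (S T : Γ → Matrix (Fin ℓ) (Fin ℓ) ℤ)
    (hS : ∀ γ, IsUnit (S γ).det) (hT : ∀ γ, IsUnit (T γ).det)
    (d : Γ → Fin ℓ → ℤ)
    (hSNF : ∀ γ, S γ * ((ρ γ : Matrix (Fin ℓ) (Fin ℓ) ℤ) - 1) * T γ = Matrix.diagonal (d γ))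
    (hpos : ∀ γ, ∀ i : Fin ℓ, (i : ℕ) < r γ → 0 < d γ i)
    (hzero : ∀ γ, ∀ i : Fin ℓ, r γ ≤ (i : ℕ) → d γ i = 0)
    (hdvd : ∀ γ, ∀ i j : Fin ℓ, i ≤ j → (j : ℕ) < r γ → d γ i ∣ d γ j)
    (e : Γ → ℕ)
    (he : ∀ γ, (r γ = 0 ∧ e γ = 1) ∨ ∃ i : Fin ℓ, (i : ℕ) + 1 = r γ ∧ (e γ : ℤ) = d γ i) :
    ∃ g : ℕ → Polynomial ℂ,
      ∀ q : ℕ, 0 < q →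
        (Fintype.card Γ : ℂ)⁻¹ * ∑ γ : Γ, V.character γ *
            (starRingEnd ℂ) ((fixCard (ρ γ : Matrix (Fin ℓ) (Fin ℓ) ℤ) q : ℂ))
          = (g (Nat.gcd (Finset.univ.lcm e) q)).eval (q : ℂ) := by

  classical
  set n := Finset.univ.lcm e with hn
  refine ⟨fun m => Polynomial.C ((Fintype.card Γ : ℂ)⁻¹) * ∑ γ : Γ,
    Polynomial.C (V.character γ) * ∏ i : Fin ℓ,
      (if (i : ℕ) < r γ then Polynomial.C ((Nat.gcd m (d γ i).toNat : ℂ)) else Polynomial.X),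
    fun q hq => ?_⟩
  have hq0 : q ≠ 0 := hq.ne'
  simp only [Polynomial.eval_mul, Polynomial.eval_C, Polynomial.eval_finset_sum,
    Polynomial.eval_prod, apply_ite (Polynomial.eval (q : ℂ)), Polynomial.eval_X]
  congr 1
  apply Finset.sum_congr rfl
  intro γ _
  congr 1
  have hd : ∀ i, 0 ≤ d γ i := by
    intro i
    by_cases h : (i : ℕ) < r γ
    · exact le_of_lt (hpos γ i h)
    · rw [hzero γ i (le_of_not_gt h)]
  have hfix : fixCard (ρ γ : Matrix (Fin ℓ) (Fin ℓ) ℤ) q = ∏ i, Nat.gcd q (d γ i).toNat :=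
    fixCard_eq q hq0 _ (S γ) (T γ) (hS γ) (hT γ) (d γ) hd (hSNF γ)
  rw [hfix, map_natCast]
  push_cast
  apply Finset.prod_congr rfl
  intro i _
  by_cases h : (i : ℕ) < r γ
  · rw [if_pos h]
    have hdn : (d γ i).toNat ∣ n := by
      rcases he γ with ⟨hr0, _⟩ | ⟨i0, hi0, hei0⟩
      · omega
      · have hle : i ≤ i0 := by
          rw [Fin.le_def]; omega
        have h1 : d γ i ∣ d γ i0 := hdvd γ i i0 hle (by omega)
        have h2 : (d γ i).toNat ∣ e γ := by
          rw [← Int.natCast_dvd_natCast, Int.toNat_of_nonneg (hd i), ← hei0] at *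
          exact h1
        exact h2.trans (Finset.dvd_lcm (Finset.mem_univ γ))
    have : Nat.gcd (Nat.gcd n q) (d γ i).toNat = Nat.gcd q (d γ i).toNat := by
      rw [Nat.gcd_comm n q, Nat.gcd_assoc, Nat.gcd_comm n, Nat.gcd_eq_left hdn]
    rw [this]
  · rw [if_neg h, hzero γ i (le_of_not_gt h)]
    simp
end

section
/- Let Γ be a finite group acting on L ≅ ℤ^ℓ via injective ρ : Γ → GL(L). Then the number of Γ-orbits of L/qL, as a function of q ∈ ℤ_{>0}, is a quasi-polynomial of degree ℓ with leading coefficient 1/#Γ, equal to (1/#Γ) Σ_{γ∈Γ} #(L/qL)^γ by Burnside's lemma. -/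
/-!
By Burnside's lemma the orbit count is the average over `γ ∈ Γ` of the number of fixed points,
i.e. of the kernel of `ρ(γ) - 1` acting on `(ℤ/qℤ)^ℓ`. For an integer matrix `A` with row lattice
`N ⊆ ℤ^ℓ`, this kernel is as large as the cokernel `ℤ^ℓ / (N + qℤ^ℓ)`. In a Smith basis `e_j`
with `N` spanned by the `a_i e_{f i}`, Bézout shows that `N + qℤ^ℓ` is spanned by the
`gcd(a_i, q) e_{f i}` and the remaining `q e_j`, so the count is `∏ gcd(a_i, q) · q^(ℓ - r)`.
It depends on `q` only through `q^(ℓ - r)` and `q mod ∏ |a_i|`, and injectivity of `ρ` makes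
`γ = 1` the only term with `r = 0`, which gives the leading term `q^ℓ / #Γ`.
-/

open Matrix Polynomial Pointwise

lemma Fintype.prod_extend_const {α ι M : Type*} [Fintype α] [Fintype ι] [CommMonoid M]
    (f : α ↪ ι) (g : α → M) (c : M) :
    ∏ j, Function.extend f g (fun _ => c) j =
      (∏ i, g i) * c ^ (Fintype.card ι - Fintype.card α) := by
  classical
  have hc : ∀ j ∈ (Finset.univ.map f)ᶜ, Function.extend f g (fun _ => c) j = c := by
    rintro j hj
    refine Function.extend_apply' _ _ _ ?_
    rintro ⟨i, rfl⟩
    simp at hj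
  rw [← Finset.prod_mul_prod_compl (Finset.univ.map f), Finset.prod_map, Finset.prod_congr rfl hc,
    Finset.prod_const, Finset.card_compl, Finset.card_map, Finset.card_univ]
  simp only [f.injective.extend_apply]

lemma LinearIndependent.smul_of_ne_zero {ι R M : Type*} [Ring R] [NoZeroDivisors R]
    [AddCommGroup M] [Module R M] {v : ι → M} (hv : LinearIndependent R v) {d : ι → R}
    (hd : ∀ i, d i ≠ 0) : LinearIndependent R fun i => d i • v i := by
  refine linearIndependent_iff'.mpr fun s g hg i hi => ?_
  have := linearIndependent_iff'.mp hv s (fun i => g i * d i)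
    (by simpa only [mul_smul] using hg) i hi
  exact (mul_eq_zero.mp this).resolve_right (hd i)

lemma Submodule.smul_top_eq_span_smul_basis {R M ι : Type*} [CommRing R] [AddCommGroup M]
    [Module R M] (b : Module.Basis ι R M) (c : R) :
    c • (⊤ : Submodule R M) = Submodule.span R (Set.range fun j => c • b j) := by
  rw [← b.span_eq, Submodule.smul_span, Set.smul_set_range]

namespace Module.Basis.SmithNormalForm

lemma a_ne_zero {R M ι : Type*} [CommRing R] [Nontrivial R] [AddCommGroup M] [Module R M]
    {N : Submodule R M} {n : ℕ} (snf : Basis.SmithNormalForm N ι n) (i : Fin n) : snf.a i ≠ 0 := by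
  intro h
  apply snf.bN.ne_zero i
  ext
  simp [snf.snf i, h]

lemma span_range_a_smul_bM {R M ι : Type*} [CommRing R] [AddCommGroup M] [Module R M]
    {N : Submodule R M} {n : ℕ} (snf : Basis.SmithNormalForm N ι n) :
    Submodule.span R (Set.range fun i => snf.a i • snf.bM (snf.f i)) = N := by
  have h := (Submodule.span_val_image_eq_iff N _).mpr snf.bN.span_eq
  rw [← Set.range_comp] at h
  simpa only [Function.comp_def, snf.snf] using h

variable {ι M : Type*} [AddCommGroup M] {N : Submodule ℤ M} {n : ℕ}
  (snf : Basis.SmithNormalForm N ι n) (q : ℕ)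

noncomputable def supSmulTopDiag : ι → ℕ :=
  Function.extend snf.f (fun i => Int.gcd (snf.a i) q) fun _ => q

lemma supSmulTopDiag_apply_f (i : Fin n) : snf.supSmulTopDiag q (snf.f i) = Int.gcd (snf.a i) q :=
  snf.f.injective.extend_apply _ _ i

lemma supSmulTopDiag_of_notMem_range {j : ι} (hj : j ∉ Set.range snf.f) :
    snf.supSmulTopDiag q j = q :=
  Function.extend_apply' _ _ _ hj

lemma supSmulTopDiag_dvd (j : ι) : snf.supSmulTopDiag q j ∣ q := by
  by_cases hj : j ∈ Set.range snf.f
  · obtain ⟨i, rfl⟩ := hj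
    rw [supSmulTopDiag_apply_f]
    exact Int.natCast_dvd_natCast.mp (Int.gcd_dvd_right _ _)
  · rw [supSmulTopDiag_of_notMem_range snf q hj]

lemma prod_supSmulTopDiag [Fintype ι] :
    ∏ j, snf.supSmulTopDiag q j = (∏ i, Int.gcd (snf.a i) q) * q ^ (Fintype.card ι - n) := by
  rw [supSmulTopDiag, Fintype.prod_extend_const, Fintype.card_fin]

lemma span_supSmulTopDiag_smul_bM :
    Submodule.span ℤ (Set.range fun j => (snf.supSmulTopDiag q j : ℤ) • snf.bM j) =
      N ⊔ (q : ℤ) • ⊤ := by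
  apply le_antisymm
  · simp only [Submodule.span_le, Set.range_subset_iff, SetLike.mem_coe]
    intro j
    by_cases hj : j ∈ Set.range snf.f
    · obtain ⟨i, rfl⟩ := hj
      have hN : snf.a i • snf.bM (snf.f i) ∈ N := snf.snf i ▸ (snf.bN i).2
      have hq : (q : ℤ) • snf.bM (snf.f i) ∈ (q : ℤ) • (⊤ : Submodule ℤ M) :=
        Submodule.smul_mem_pointwise_smul _ _ _ trivial
      rw [supSmulTopDiag_apply_f, Int.gcd_eq_gcd_ab, add_smul, mul_comm,
        mul_smul, mul_comm, mul_smul]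
      exact Submodule.add_mem _ (Submodule.mem_sup_left (N.smul_mem _ hN))
        (Submodule.mem_sup_right (Submodule.smul_mem _ _ hq))
    · rw [supSmulTopDiag_of_notMem_range snf q hj]
      exact Submodule.mem_sup_right (Submodule.smul_mem_pointwise_smul _ _ _ trivial)
  · refine sup_le (snf.span_range_a_smul_bM.ge.trans ?_) ?_
    · simp only [Submodule.span_le, Set.range_subset_iff, SetLike.mem_coe]
      intro i
      obtain ⟨c, hc⟩ : (snf.supSmulTopDiag q (snf.f i) : ℤ) ∣ snf.a i := by
        rw [supSmulTopDiag_apply_f]; exact Int.gcd_dvd_left _ _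
      rw [hc, mul_comm, mul_smul]
      exact Submodule.smul_mem _ _ (Submodule.subset_span ⟨snf.f i, rfl⟩)
    · rw [Submodule.smul_top_eq_span_smul_basis snf.bM]
      simp only [Submodule.span_le, Set.range_subset_iff, SetLike.mem_coe]
      intro j
      obtain ⟨c, hc⟩ := Int.natCast_dvd_natCast.mpr (snf.supSmulTopDiag_dvd q j)
      have h : (q : ℤ) • snf.bM j = c • ((snf.supSmulTopDiag q j : ℤ) • snf.bM j) := by
        rw [smul_smul, mul_comm, ← hc]
      rw [h]
      exact Submodule.smul_mem _ _ (Submodule.subset_span ⟨j, rfl⟩)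

lemma supSmulTopDiag_ne_zero (hq : q ≠ 0) (j : ι) : snf.supSmulTopDiag q j ≠ 0 :=
  fun h => hq (Nat.eq_zero_of_zero_dvd (h ▸ snf.supSmulTopDiag_dvd q j))

lemma index_sup_smul_top [Fintype ι] (hq : q ≠ 0) :
    (N ⊔ (q : ℤ) • ⊤).toAddSubgroup.index =
      (∏ i, Int.gcd (snf.a i) q) * q ^ (Fintype.card ι - n) := by
  let e := Fintype.equivFin ι
  let bP : Basis ι ℤ ↥(N ⊔ (q : ℤ) • ⊤) :=
    (Basis.span (snf.bM.linearIndependent.smul_of_ne_zero fun j => Int.natCast_ne_zero.mpr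
      (snf.supSmulTopDiag_ne_zero q hq j))).map
      (LinearEquiv.ofEq _ _ (snf.span_supSmulTopDiag_smul_bM q))
  let snfP : Basis.SmithNormalForm (N ⊔ (q : ℤ) • ⊤) ι (Fintype.card ι) :=
    ⟨snf.bM, bP.reindex e, e.symm.toEmbedding, fun k => snf.supSmulTopDiag q (e.symm k),
      fun k => by simp [bP, Basis.span_apply]⟩
  rw [snfP.toAddSubgroup_index_eq_pow_mul_prod, ← prod_supSmulTopDiag, ← e.symm.prod_comp]
  simp [snfP, Ideal.span_singleton_toAddSubgroup_eq_zmultiples, Int.index_zmultiples]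

end Module.Basis.SmithNormalForm

lemma ker_intCastAddHom_compLeft (ι : Type*) (q : ℕ) :
    ((Int.castAddHom (ZMod q)).compLeft ι).ker =
      ((q : ℤ) • ⊤ : Submodule ℤ (ι → ℤ)).toAddSubgroup := by
  ext x
  rw [AddMonoidHom.mem_ker, Submodule.mem_toAddSubgroup, Submodule.mem_smul_pointwise_iff_exists]
  simp only [Submodule.mem_top, true_and]
  constructor
  · intro h
    refine ⟨fun j => x j / q, funext fun j => Int.mul_ediv_cancel' ?_⟩
    simpa [ZMod.intCast_zmod_eq_zero_iff_dvd] using congrFun h j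
  · rintro ⟨y, rfl⟩
    ext j
    simp

lemma card_ker_vecMul_map_intCast_eq_index {ι : Type*} [Fintype ι] (A : Matrix ι ι ℤ) (q : ℕ)
    [NeZero q] :
    Nat.card {x : ι → ZMod q // x ᵥ* A.map (Int.cast : ℤ → ZMod q) = 0} =
      (LinearMap.range A.vecMulLinear ⊔ (q : ℤ) • ⊤).toAddSubgroup.index := by
  let π : (ι → ℤ) →+ (ι → ZMod q) := (Int.castAddHom (ZMod q)).compLeft ι
  let F : (ι → ZMod q) →+ (ι → ZMod q) := (A.map Int.cast).vecMulLinear.toAddMonoidHom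
  have hπ : Function.Surjective π := ZMod.intCast_surjective.comp_left
  have hFπ : F.comp π = π.comp A.vecMulLinear.toAddMonoidHom := by
    ext x j
    exact ((Int.castRingHom (ZMod q)).map_vecMul A x j).symm
  have hrange :
      F.range.comap π = (LinearMap.range A.vecMulLinear ⊔ (q : ℤ) • ⊤).toAddSubgroup := by
    rw [F.range_eq_map, ← (AddMonoidHom.range_eq_top.mpr hπ), ← AddMonoidHom.range_comp, hFπ,
      AddMonoidHom.range_comp, AddSubgroup.comap_map_eq, Submodule.sup_toAddSubgroup,
      ker_intCastAddHom_compLeft, LinearMap.range_toAddSubgroup]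
  calc Nat.card {x : ι → ZMod q // x ᵥ* A.map (Int.cast : ℤ → ZMod q) = 0}
      = Nat.card F.ker := rfl
    _ = F.range.index := AddSubgroup.index_range.symm
    _ = _ := by rw [← hrange, AddSubgroup.index_comap_of_surjective _ hπ]

lemma card_quot_vecMul_eq_inv_mul_sum {G n R : Type*} [Group G] [Fintype G] [Fintype n]
    [DecidableEq n] [Semiring R] [Finite R] (ψ : G →* Matrix n n R) :
    (Nat.card (Quot fun x y : n → R => ∃ g, x ᵥ* ψ g = y) : ℚ) =
      (Fintype.card G : ℚ)⁻¹ * ∑ g, (Nat.card {x : n → R // x ᵥ* ψ g = x} : ℚ) := by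
  classical
  have := Fintype.ofFinite R
  -- `g • x = x ᵥ* ψ g⁻¹` turns right multiplication into a left action
  let _ : MulAction G (n → R) := MulAction.compHom _ (ψ.op.comp (MulEquiv.inv' G).toMonoidHom)
  have hsmul : ∀ (g : G) (x : n → R), g⁻¹ • x = x ᵥ* ψ g := fun g x => by
    change x ᵥ* ψ g⁻¹⁻¹ = _
    rw [inv_inv]
  have hquot : Nat.card (Quot fun x y : n → R => ∃ g, x ᵥ* ψ g = y) =
      Nat.card (MulAction.orbitRel.Quotient G (n → R)) := by
    refine Nat.card_congr (Quot.congrRight fun x y => ?_)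
    rw [MulAction.orbitRel_apply, MulAction.mem_orbit_symm, MulAction.mem_orbit_iff]
    simp only [← hsmul]
    exact (inv_surjective.exists (p := fun g : G => g • x = y)).symm
  have hfix : ∀ g : G, Nat.card {x : n → R // x ᵥ* ψ g = x} =
      Fintype.card (MulAction.fixedBy (n → R) g⁻¹) := by
    intro g
    rw [← Nat.card_eq_fintype_card]
    simp only [MulAction.fixedBy, hsmul]
    rfl
  have hburnside := MulAction.sum_card_fixedBy_eq_card_orbits_mul_card_group G (n → R)
  have hsum : ∑ g, Fintype.card (MulAction.fixedBy (n → R) g) =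
      ∑ g, Nat.card {x : n → R // x ᵥ* ψ g = x} :=
    Fintype.sum_equiv (Equiv.inv G) _ _ fun g => by
      simp only [Equiv.inv_apply]
      rw [hfix, inv_inv]
  rw [hsum] at hburnside
  rw [hquot, Nat.card_eq_fintype_card, eq_inv_mul_iff_mul_eq₀ (by positivity), mul_comm]
  exact_mod_cast hburnside.symm

lemma card_quot_vecMul_map_intCast_eq_inv_mul_sum {G ι : Type*} [Group G] [Fintype G] [Fintype ι]
    [DecidableEq ι] (ρ : G →* GL ι ℤ) (q : ℕ) [NeZero q] :
    (Nat.card (Quot fun x y : ι → ZMod q =>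
        ∃ g, x ᵥ* (ρ g : Matrix ι ι ℤ).map (Int.cast : ℤ → ZMod q) = y) : ℚ) =
      (Fintype.card G : ℚ)⁻¹ * ∑ g, (Nat.card {x : ι → ZMod q //
        x ᵥ* (ρ g : Matrix ι ι ℤ).map (Int.cast : ℤ → ZMod q) = x} : ℚ) :=
  card_quot_vecMul_eq_inv_mul_sum
    ((Units.coeHom _).comp ((GeneralLinearGroup.map (Int.castRingHom (ZMod q))).comp ρ))

lemma Int.gcd_natCast_mod_of_natAbs_dvd {a : ℤ} {n : ℕ} (h : a.natAbs ∣ n) (q : ℕ) :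
    Int.gcd a (q % n : ℕ) = Int.gcd a q := by
  simp only [Int.gcd, Int.natAbs_natCast]
  rw [Nat.gcd_rec, Nat.mod_mod_of_dvd _ h, ← Nat.gcd_rec]

lemma exists_card_ker_vecMul_map_intCast_eq {ι : Type*} [Fintype ι] (A : Matrix ι ι ℤ) :
    ∃ (r : ℕ) (a : Fin r → ℤ), r ≤ Fintype.card ι ∧ (∀ i, a i ≠ 0) ∧ (r = 0 ↔ A = 0) ∧
      ∀ q : ℕ, q ≠ 0 →
        Nat.card {x : ι → ZMod q // x ᵥ* A.map (Int.cast : ℤ → ZMod q) = 0} =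
          (∏ i, Int.gcd (a i) q) * q ^ (Fintype.card ι - r) := by
  classical
  obtain ⟨r, snf⟩ := (LinearMap.range A.vecMulLinear).smithNormalForm (Pi.basisFun ℤ ι)
  refine ⟨r, snf.a, by simpa using Fintype.card_le_of_embedding snf.f, snf.a_ne_zero, ?_,
    fun q hq => ?_⟩
  · rw [← Fintype.card_fin r, ← Module.finrank_eq_card_basis snf.bN, Submodule.finrank_eq_zero,
      LinearMap.range_eq_bot]
    exact LinearMap.toMatrixRight'.symm.map_eq_zero_iff
  · have : NeZero q := ⟨hq⟩
    rw [card_ker_vecMul_map_intCast_eq_index, snf.index_sup_smul_top q hq]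

lemma card_fixed_vecMul_map_intCast_eq_card_ker {ι : Type*} [Fintype ι] [DecidableEq ι]
    (A : Matrix ι ι ℤ) (q : ℕ) :
    Nat.card {x : ι → ZMod q // x ᵥ* A.map (Int.cast : ℤ → ZMod q) = x} =
      Nat.card {x : ι → ZMod q // x ᵥ* (A - 1).map (Int.cast : ℤ → ZMod q) = 0} := by
  refine Nat.card_congr (Equiv.subtypeEquivRight fun x => ?_)
  rw [Matrix.map_sub _ (Int.cast_sub · ·), Matrix.map_one _ Int.cast_zero Int.cast_one,
    vecMul_sub, vecMul_one, sub_eq_zero]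

lemma exists_card_fixed_vecMul_map_intCast_eq {G ι : Type*} [Group G] [Fintype ι] [DecidableEq ι]
    (ρ : G →* GL ι ℤ) (hρ : Function.Injective ρ) :
    ∃ (r : G → ℕ) (a : ∀ g, Fin (r g) → ℤ), (∀ g, r g ≤ Fintype.card ι) ∧
      (∀ g, r g = 0 ↔ g = 1) ∧ (∀ g i, a g i ≠ 0) ∧ ∀ g (q : ℕ), q ≠ 0 →
        Nat.card {x : ι → ZMod q // x ᵥ* (ρ g : Matrix ι ι ℤ).map (Int.cast : ℤ → ZMod q) = x} =
          (∏ i, Int.gcd (a g i) q) * q ^ (Fintype.card ι - r g) := by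
  choose r a hr_le ha hr_zero hcard using fun g : G =>
    exists_card_ker_vecMul_map_intCast_eq ((ρ g : Matrix ι ι ℤ) - 1)
  refine ⟨r, a, hr_le, fun g => ?_, ha, fun g q hq => ?_⟩
  · rw [hr_zero, sub_eq_zero, ← Units.val_one, Units.val_inj, ← map_one ρ, hρ.eq_iff]
  · rw [card_fixed_vecMul_map_intCast_eq_card_ker, hcard g q hq]

lemma Polynomial.coeff_sum_C_mul_X_pow_of_unique {ι R : Type*} [Fintype ι] [Semiring R]
    (c : ι → R) (e : ι → ℕ) {d : ℕ} {i₀ : ι} (he : ∀ i, e i = d ↔ i = i₀) :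
    (∑ i, C (c i) * X ^ e i).coeff d = c i₀ := by
  classical
  simp only [finsetSum_coeff, coeff_C_mul_X_pow, eq_comm (a := d), he, Finset.sum_ite_eq',
    Finset.mem_univ, if_true]

lemma Polynomial.natDegree_sum_C_mul_X_pow_of_unique {ι R : Type*} [Fintype ι] [Semiring R]
    (c : ι → R) (e : ι → ℕ) {d : ℕ} {i₀ : ι} (hle : ∀ i, e i ≤ d) (he : ∀ i, e i = d ↔ i = i₀)
    (hc : c i₀ ≠ 0) :
    (∑ i, C (c i) * X ^ e i).natDegree = d := by
  refine le_antisymm (natDegree_sum_le_of_forall_le _ _ fun i _ => ?_) (le_natDegree_of_ne_zero ?_)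
  · exact (natDegree_C_mul_X_pow_le _ _).trans (hle i)
  · rwa [coeff_sum_C_mul_X_pow_of_unique c e he]

/-- The number of `Γ`-orbits of `(ℤ/qℤ)^ℓ` (under the action
induced by an injective `ρ : Γ → GL_ℓ(ℤ)`) is, as a function of `q > 0`, a
quasi-polynomial of degree `ℓ` with leading coefficient `1/#Γ`, and equals
`(1/#Γ) Σ_{γ∈Γ} #((ℤ/qℤ)^ℓ)^γ` by Burnside's lemma. -/
theorem stmt13 (ℓ : ℕ) (Γ : Type*) [Group Γ] [Fintype Γ]
    (ρ : Γ →* Matrix.GeneralLinearGroup (Fin ℓ) ℤ) (hρ : Function.Injective ρ) :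
    ∃ n : ℕ, 0 < n ∧ ∃ g : ℕ → Polynomial ℚ,
      (∀ q : ℕ, 0 < q →
        ((Nat.card (Quot (fun x y : Fin ℓ → ZMod q => ∃ γ : Γ,
            Matrix.vecMul x ((ρ γ : Matrix (Fin ℓ) (Fin ℓ) ℤ).map
              (Int.cast : ℤ → ZMod q)) = y)) : ℚ)
          = (g (q % n)).eval (q : ℚ))
        ∧ ((Nat.card (Quot (fun x y : Fin ℓ → ZMod q => ∃ γ : Γ,
            Matrix.vecMul x ((ρ γ : Matrix (Fin ℓ) (Fin ℓ) ℤ).map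
              (Int.cast : ℤ → ZMod q)) = y)) : ℚ)
          = (Fintype.card Γ : ℚ)⁻¹ * ∑ γ : Γ,
              (Nat.card {x : Fin ℓ → ZMod q //
                Matrix.vecMul x ((ρ γ : Matrix (Fin ℓ) (Fin ℓ) ℤ).map
                  (Int.cast : ℤ → ZMod q)) = x} : ℚ)))
      ∧ ∀ a : ℕ, a < n →
          (g a).natDegree = ℓ ∧ (g a).coeff ℓ = (Fintype.card Γ : ℚ)⁻¹ := by
  obtain ⟨r, a, hr_le, hr, ha, hcard⟩ := exists_card_fixed_vecMul_map_intCast_eq ρ hρ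
  simp only [Fintype.card_fin] at hr_le hcard
  set n := ∏ γ, ∏ i, (a γ i).natAbs
  have hdvd : ∀ γ i, (a γ i).natAbs ∣ n := fun γ i =>
    (Finset.dvd_prod_of_mem _ (Finset.mem_univ i)).trans
      (Finset.dvd_prod_of_mem (fun γ => ∏ i, (a γ i).natAbs) (Finset.mem_univ γ))
  let g : ℕ → ℚ[X] := fun m =>
    ∑ γ, C ((Fintype.card Γ : ℚ)⁻¹ * ∏ i, (Int.gcd (a γ i) m : ℚ)) * X ^ (ℓ - r γ)
  refine ⟨n, Finset.prod_pos fun γ _ => Finset.prod_pos fun i _ => Int.natAbs_pos.mpr (ha γ i),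
    g, fun q hq => ?_, fun m _ => ?_⟩
  · have : NeZero q := ⟨hq.ne'⟩
    have hburnside := card_quot_vecMul_map_intCast_eq_inv_mul_sum ρ q
    refine ⟨?_, hburnside⟩
    rw [hburnside, eval_finsetSum, Finset.mul_sum]
    refine Finset.sum_congr rfl fun γ _ => ?_
    rw [hcard γ q hq.ne']
    simp only [eval_mul, eval_C, eval_pow, eval_X,
      Int.gcd_natCast_mod_of_natAbs_dvd (hdvd γ _)]
    push_cast
    ring
  · have he : ∀ γ, ℓ - r γ = ℓ ↔ γ = 1 := fun γ => by
      have := hr_le γ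
      rw [← hr γ]
      omega
    have : IsEmpty (Fin (r 1)) := by rw [(hr 1).mpr rfl]; infer_instance
    have hc : (Fintype.card Γ : ℚ)⁻¹ * ∏ i, (Int.gcd (a 1 i) m : ℚ) = (Fintype.card Γ : ℚ)⁻¹ := by
      rw [Fintype.prod_empty, mul_one]
    refine ⟨natDegree_sum_C_mul_X_pow_of_unique _ _ (fun γ => Nat.sub_le _ _) he ?_, ?_⟩
    · rw [hc]; positivity
    · rw [coeff_sum_C_mul_X_pow_of_unique _ _ he, hc]
end

section
/- Let Γ be a finite group acting on L ≅ ℤ^ℓ via ρ : Γ → GL(L), and define the reciprocity character δ_ρ(γ) = det(R_γ) = (−1)^{rank(R_γ − I_ℓ)}. Then δ_ρ is a 1-dimensional (hence irreducible) character of Γ, and for every irreducible character χ_i, the quasi-polynomials of multiplicities satisfy m(χ_i ⊗ δ_ρ; q) = (−1)^ℓ m(χ_i; −q), where m(χ_i; −q) denotes evaluation of the quasi-polynomial constituents at −q (with constituent chosen by the class of −q). -/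
open Matrix Module Polynomial Filter

/-!
A finite-order endomorphism `f` of a real vector space is semisimple, so its fixed space has an
`f`-invariant complement `W`, of dimension `rank (f - 1)`. The real eigenvalues of `f` on `W` are
roots of unity other than `1`, hence negative, so the monic characteristic polynomial of `f|W` is
positive on `[0, ∞)`; its value at `0` is `(-1) ^ dim W * det f`, and `det f = ±1` forces
`det f = (-1) ^ rank (f - 1)`.

Through the Smith normal form, the fixed points of `R_γ` on `(ℤ/q)^ℓ` number `∏ gcd (d_i, q)`:
the `r γ` nonzero divisors give the constituent and the `ℓ - r γ` zero ones give `q ^ (ℓ - r γ)`,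
which the sign `(-1) ^ r γ` turns into `(-1) ^ ℓ * (-q) ^ (ℓ - r γ)`.
-/

theorem ZMod.card_mul_intCast_eq_zero (q : ℕ) [NeZero q] (a : ℤ) :
    Nat.card {z : ZMod q // z * (a : ZMod q) = 0} = Int.gcd a q := by
  have h : ∀ z : ZMod q, z * (a : ZMod q) = 0 ↔ z ∈ (nsmulAddMonoidHom a.natAbs).ker := by
    intro z
    rw [AddMonoidHom.mem_ker, nsmulAddMonoidHom_apply, natAbs_nsmul_eq_zero, zsmul_eq_mul,
      mul_comm]
  rw [Nat.card_congr (Equiv.subtypeEquivRight h), IsAddCyclic.card_nsmulAddMonoidHom_ker,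
    Nat.card_zmod, Int.gcd, Nat.gcd_comm]
  rfl

namespace Matrix

variable {n R : Type*} [Fintype n] [DecidableEq n] [CommRing R]

theorem card_vecMul_mul_mul_eq_zero {A U V : Matrix n n R} (hU : IsUnit U.det)
    (hV : IsUnit V.det) :
    Nat.card {x : n → R // x ᵥ* (U * A * V) = 0} = Nat.card {x : n → R // x ᵥ* A = 0} := by
  rw [← isUnit_iff_isUnit_det] at hU hV
  let e : (n → R) ≃ (n → R) := .ofBijective (· ᵥ* U)
    ⟨vecMul_injective_of_isUnit hU, vecMul_surjective_iff_isUnit.2 hU⟩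
  refine Nat.card_congr (e.subtypeEquiv fun x => ?_)
  rw [← vecMul_vecMul, ← vecMul_vecMul]
  exact (vecMul_injective_of_isUnit hV).eq_iff' (zero_vecMul V)

theorem card_vecMul_diagonal_eq_zero (d : n → R) :
    Nat.card {x : n → R // x ᵥ* diagonal d = 0} = ∏ i, Nat.card {z : R // z * d i = 0} := by
  simp only [funext_iff, vecMul_diagonal, Pi.zero_apply]
  rw [Nat.card_congr (Equiv.subtypePiEquivPi (p := fun i z => z * d i = 0)), Nat.card_pi]

end Matrix

theorem fixCard_eq_prod_gcd {ℓ : ℕ} {M S T : Matrix (Fin ℓ) (Fin ℓ) ℤ} {d : Fin ℓ → ℤ}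
    (hS : IsUnit S.det) (hT : IsUnit T.det) (hSNF : S * (M - 1) * T = diagonal d)
    (q : ℕ) [NeZero q] :
    fixCard M q = ∏ i, Int.gcd (d i) q := by
  let π := (Int.castRingHom (ZMod q)).mapMatrix (m := Fin ℓ)
  have hfix : ∀ x : Fin ℓ → ZMod q, x ᵥ* π M = x ↔ x ᵥ* (π M - 1) = 0 := fun x => by
    rw [vecMul_sub, vecMul_one, sub_eq_zero]
  have hdiag : π S * (π M - 1) * π T = diagonal fun i => (d i : ZMod q) := by
    rw [← map_one π, ← map_sub, ← map_mul, ← map_mul, hSNF]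
    exact diagonal_map Int.cast_zero
  change Nat.card {x // x ᵥ* π M = x} = _
  rw [Nat.card_congr (Equiv.subtypeEquivRight hfix),
    ← card_vecMul_mul_mul_eq_zero (U := π S) (V := π T), hdiag, card_vecMul_diagonal_eq_zero]
  · exact Finset.prod_congr rfl fun i _ => ZMod.card_mul_intCast_eq_zero q (d i)
  · rw [← RingHom.map_det]; exact hS.map _
  · rw [← RingHom.map_det]; exact hT.map _

theorem Polynomial.Monic.eval_pos_of_forall_not_isRoot {p : ℝ[X]} (hp : p.Monic) {x : ℝ}
    (hroot : ∀ y, x ≤ y → ¬ p.IsRoot y) : 0 < p.eval x := by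
  by_contra! hx
  have hdeg : 0 < p.degree := by
    refine natDegree_pos_iff_degree_pos.1 (Nat.pos_of_ne_zero fun h0 => ?_)
    rw [hp.natDegree_eq_zero.1 h0, eval_one] at hx
    exact one_pos.not_ge hx
  obtain ⟨y, hy, hxy⟩ := ((tendsto_atTop_of_leadingCoeff_nonneg p hdeg
    (hp.leadingCoeff ▸ zero_le_one)).eventually_gt_atTop 0 |>.and (eventually_ge_atTop x)).exists
  obtain ⟨c, hc, hc0⟩ := intermediate_value_Icc hxy p.continuous.continuousOn ⟨hx, hy.le⟩
  exact hroot c hc.1 hc0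

theorem LinearMap.det_eq_det_restrict_mul_det_restrict {K V : Type*} [Field K] [AddCommGroup V]
    [Module K V] [FiniteDimensional K V] (f : Module.End K V)
    {p q : Submodule K V} (hpq : IsCompl p q) (hp : ∀ x ∈ p, f x ∈ p)
    (hq : ∀ x ∈ q, f x ∈ q) :
    LinearMap.det f = LinearMap.det (f.restrict hp) * LinearMap.det (f.restrict hq) := by
  let e := p.prodEquivOfIsCompl q hpq
  have hconj : f = e.toLinearMap ∘ₗ (f.restrict hp).prodMap (f.restrict hq) ∘ₗ e.symm := by
    ext x
    obtain ⟨y, rfl⟩ := e.surjective x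
    simp [e]
  conv_lhs => rw [hconj]
  rw [det_conj, det_prodMap]

theorem LinearMap.neg_one_pow_finrank_mul_det_pos {V : Type*} [AddCommGroup V] [Module ℝ V]
    [FiniteDimensional ℝ V] (f : Module.End ℝ V)
    (hf : ∀ s : ℝ, 0 ≤ s → ¬ f.HasEigenvalue s) : 0 < (-1) ^ finrank ℝ V * LinearMap.det f := by
  rw [det_eq_sign_charpoly_coeff, ← mul_assoc, ← mul_pow, neg_one_mul, neg_neg, one_pow, one_mul,
    coeff_zero_eq_eval_zero]
  exact f.charpoly_monic.eval_pos_of_forall_not_isRoot fun s hs =>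
    (f.hasEigenvalue_iff_isRoot_charpoly s).not.1 (hf s hs)

theorem LinearMap.det_eq_neg_one_pow_finrank_range_sub_one {V : Type*} [AddCommGroup V]
    [Module ℝ V] [FiniteDimensional ℝ V] {f : Module.End ℝ V} {n : ℕ} (hn : n ≠ 0)
    (hf : f ^ n = 1) : LinearMap.det f = (-1) ^ finrank ℝ (range (f - 1)) := by
  set m := finrank ℝ (range (f - 1))
  have hss : f.IsSemisimple := Module.End.isSemisimple_of_squarefree_aeval_eq_zero
    (separable_X_pow_sub_C 1 (Nat.cast_ne_zero.2 hn) one_ne_zero).squarefree (by simp [hf])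
  have hK : ∀ x ∈ ker (f - 1), f x ∈ ker (f - 1) := fun x hx => by
    rw [mem_ker, sub_apply, Module.End.one_apply, sub_eq_zero] at hx ⊢
    rw [hx, hx]
  obtain ⟨W, hW, hKW⟩ := Module.End.isSemisimple_iff.1 hss _ hK
  have hKid : f.restrict hK = LinearMap.id := by
    ext ⟨x, hx⟩
    rw [mem_ker, sub_apply, Module.End.one_apply, sub_eq_zero] at hx
    simp [hx]
  have hdet : LinearMap.det f = LinearMap.det (f.restrict hW) := by
    rw [f.det_eq_det_restrict_mul_det_restrict hKW hK hW, hKid, LinearMap.det_id, one_mul]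
  have hdim : finrank ℝ W = m := by
    have := Submodule.finrank_add_eq_of_isCompl hKW
    have := (f - 1).finrank_range_add_finrank_ker
    omega
  have hnoeig : ∀ s : ℝ, 0 ≤ s → ¬ Module.End.HasEigenvalue (f.restrict hW) s := by
    intro s hs hev
    obtain ⟨w, hw⟩ := hev.exists_hasEigenvector
    have hv : f.HasEigenvector s (w : V) := Module.End.hasEigenvector_iff.2
      ⟨Module.End.mem_eigenspace_iff.2 (congrArg Subtype.val hw.apply_eq_smul), by simpa using hw.2⟩
    have hs1 : s = 1 := by
      have hpow := hv.pow_apply n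
      rw [hf, Module.End.one_apply] at hpow
      rw [← pow_eq_one_iff_of_nonneg hs hn]
      exact smul_left_injective ℝ hv.2 (hpow.symm.trans (one_smul ℝ _).symm)
    have hwK : (w : V) ∈ ker (f - 1) := by
      rw [mem_ker, sub_apply, Module.End.one_apply, sub_eq_zero, hv.apply_eq_smul, hs1, one_smul]
    exact hv.2 (hKW.disjoint.le_bot ⟨hwK, w.2⟩)
  have habs : |LinearMap.det f| = 1 := by
    rw [← pow_eq_one_iff_of_nonneg (abs_nonneg _) hn, ← abs_pow, ← map_pow, hf, map_one, abs_one]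
  have hpos := (f.restrict hW).neg_one_pow_finrank_mul_det_pos hnoeig
  rw [← hdet, hdim] at hpos
  have hunit : (-1) ^ m * LinearMap.det f = 1 := by
    rw [← abs_of_pos hpos, abs_mul, abs_pow, abs_neg, abs_one, one_pow, one_mul, habs]
  calc LinearMap.det f = (-1) ^ m * ((-1) ^ m * LinearMap.det f) := by
        rw [← mul_assoc, ← mul_pow, neg_one_mul, neg_neg, one_pow, one_mul]
    _ = (-1) ^ m := by rw [hunit, mul_one]

theorem Matrix.rank_map_intCast_eq_card_ne_zero {m : Type*} [Fintype m] [DecidableEq m]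
    (K : Type*) [Field K] [CharZero K] {M S T : Matrix m m ℤ} {d : m → ℤ}
    (hS : IsUnit S.det) (hT : IsUnit T.det) (hSNF : S * M * T = diagonal d) :
    (M.map (Int.cast : ℤ → K)).rank = Fintype.card {i // d i ≠ 0} := by
  classical
  let π := (Int.castRingHom K).mapMatrix (m := m)
  have hdiag : π S * π M * π T = diagonal fun i => (d i : K) := by
    rw [← map_mul, ← map_mul, hSNF]
    exact diagonal_map Int.cast_zero
  change (π M).rank = _
  rw [← rank_mul_eq_left_of_isUnit_det (π T) _ (by rw [← RingHom.map_det]; exact hT.map _),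
    ← rank_mul_eq_right_of_isUnit_det (π S) _ (by rw [← RingHom.map_det]; exact hS.map _),
    ← Matrix.mul_assoc, hdiag, rank_diagonal]
  exact Fintype.card_congr (Equiv.subtypeEquivRight fun i => Int.cast_ne_zero)

theorem Matrix.det_eq_neg_one_pow_rank_map_sub_one {m : Type*} [Fintype m] [DecidableEq m]
    {R : Matrix m m ℤ} {n : ℕ} (hn : n ≠ 0) (hR : R ^ n = 1) :
    R.det = (-1) ^ ((R - 1).map (Int.cast : ℤ → ℝ)).rank := by
  let A := (Int.castRingHom ℝ).mapMatrix R
  have hf : toLinAlgEquiv' A ^ n = 1 := by rw [← map_pow, ← map_pow, hR, map_one, map_one]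
  have hrange : ((R - 1).map (Int.cast : ℤ → ℝ)).mulVecLin = toLinAlgEquiv' A - 1 := by
    refine LinearMap.ext fun v => ?_
    simp [A, Matrix.map_sub]
  have hdet : (R.det : ℝ) = A.det := (Int.castRingHom ℝ).map_det R
  apply Int.cast_injective (α := ℝ)
  rw [Int.cast_pow, Int.cast_neg, Int.cast_one, hdet,
    rank, hrange, ← LinearMap.det_eq_neg_one_pow_finrank_range_sub_one hn hf]
  exact (LinearMap.det_toLin' A).symm

theorem neg_one_pow_mul_prod_gcd {ℓ r q : ℕ} (hr : r ≤ ℓ) {d : Fin ℓ → ℤ}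
    (hzero : ∀ i : Fin ℓ, r ≤ (i : ℕ) → d i = 0) :
    (-1 : ℂ) ^ r * ∏ i, (Int.gcd (d i) q : ℂ) = (-1) ^ ℓ *
      ((∏ i : Fin ℓ, if (i : ℕ) < r then (Int.gcd (d i) q : ℂ) else 1) * (-(q : ℂ)) ^ (ℓ - r)) := by
  have hsplit : ∀ i : Fin ℓ, (Int.gcd (d i) q : ℂ) =
      (if (i : ℕ) < r then (Int.gcd (d i) q : ℂ) else 1) * if (i : ℕ) < r then 1 else (q : ℂ) := by
    intro i
    split_ifs with h
    · rw [mul_one]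
    · rw [one_mul, hzero i (not_lt.1 h), Int.gcd_zero_left, Int.natAbs_natCast]
  have hq : ∏ i : Fin ℓ, (if (i : ℕ) < r then 1 else (q : ℂ)) = q ^ (ℓ - r) := by
    have hcard := Finset.card_filter_add_card_filter_not (s := Finset.univ)
      fun i : Fin ℓ => (i : ℕ) < r
    rw [Fin.card_filter_val_lt, Finset.card_univ, Fintype.card_fin] at hcard
    rw [Finset.prod_ite, Finset.prod_const_one, Finset.prod_const, one_mul]
    congr 1
    omega
  obtain ⟨k, rfl⟩ := Nat.exists_eq_add_of_le hr
  have hsign : (-1 : ℂ) ^ k * (-1) ^ k = 1 := by rw [← mul_pow]; norm_num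
  rw [Finset.prod_congr rfl fun i _ => hsplit i, Finset.prod_mul_distrib, hq,
    Nat.add_sub_cancel_left, pow_add, neg_pow (q : ℂ)]
  linear_combination (-(-1) ^ r * (∏ i : Fin (r + k),
    if (i : ℕ) < r then (Int.gcd (d i) q : ℂ) else 1) * (q : ℂ) ^ k) * hsign

theorem stmt14_general (ℓ : ℕ) (Γ : Type) [Group Γ] [Fintype Γ]
    (ρ : Γ →* Matrix.GeneralLinearGroup (Fin ℓ) ℤ)
    (V : FDRep ℂ Γ)
    (r : Γ → ℕ) (hr : ∀ γ, r γ ≤ ℓ)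
    (S T : Γ → Matrix (Fin ℓ) (Fin ℓ) ℤ)
    (hS : ∀ γ, IsUnit (S γ).det) (hT : ∀ γ, IsUnit (T γ).det)
    (d : Γ → Fin ℓ → ℤ)
    (hSNF : ∀ γ, S γ * ((ρ γ : Matrix (Fin ℓ) (Fin ℓ) ℤ) - 1) * T γ = Matrix.diagonal (d γ))
    (hpos : ∀ γ, ∀ i : Fin ℓ, (i : ℕ) < r γ → 0 < d γ i)
    (hzero : ∀ γ, ∀ i : Fin ℓ, r γ ≤ (i : ℕ) → d γ i = 0) :
    (∀ γ : Γ, (ρ γ : Matrix (Fin ℓ) (Fin ℓ) ℤ).det = (-1 : ℤ) ^ (r γ))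
    ∧ (∀ γ η : Γ, ((ρ (γ * η) : Matrix (Fin ℓ) (Fin ℓ) ℤ).det : ℤ)
        = (ρ γ : Matrix (Fin ℓ) (Fin ℓ) ℤ).det * (ρ η : Matrix (Fin ℓ) (Fin ℓ) ℤ).det)
    ∧ (∀ q : ℕ, 0 < q →
        (Fintype.card Γ : ℂ)⁻¹ * ∑ γ : Γ,
            (V.character γ * ((ρ γ : Matrix (Fin ℓ) (Fin ℓ) ℤ).det : ℂ)) *
              (starRingEnd ℂ) ((fixCard (ρ γ : Matrix (Fin ℓ) (Fin ℓ) ℤ) q : ℂ))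
          = (-1 : ℂ) ^ ℓ * ((Fintype.card Γ : ℂ)⁻¹ * ∑ γ : Γ, V.character γ *
              ((∏ i : Fin ℓ, if (i : ℕ) < r γ then (Int.gcd (d γ i) (q : ℤ) : ℂ) else 1)
                * (-(q : ℂ)) ^ (ℓ - r γ)))) := by
  have hrank (γ : Γ) :
      (((ρ γ : Matrix (Fin ℓ) (Fin ℓ) ℤ) - 1).map (Int.cast : ℤ → ℝ)).rank = r γ := by
    have hsupp (i : Fin ℓ) : d γ i ≠ 0 ↔ (i : ℕ) < r γ :=
      ⟨fun h => not_le.1 fun hi => h (hzero γ i hi), fun h => (hpos γ i h).ne'⟩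
    rw [rank_map_intCast_eq_card_ne_zero ℝ (hS γ) (hT γ) (hSNF γ), Fintype.card_subtype,
      Finset.filter_congr fun i _ => hsupp i, Fin.card_filter_val_lt, min_eq_right (hr γ)]
  have hdet (γ : Γ) : (ρ γ : Matrix (Fin ℓ) (Fin ℓ) ℤ).det = (-1) ^ r γ := by
    rw [← hrank γ]
    refine det_eq_neg_one_pow_rank_map_sub_one (orderOf_pos γ).ne' ?_
    rw [← Units.val_pow_eq_pow_val, ← map_pow, pow_orderOf_eq_one, map_one, Units.val_one]
  refine ⟨hdet, fun γ η => by rw [map_mul, Units.val_mul, det_mul], fun q hq => ?_⟩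
  have : NeZero q := ⟨hq.ne'⟩
  have hterm (γ : Γ) : V.character γ * ((ρ γ : Matrix (Fin ℓ) (Fin ℓ) ℤ).det : ℂ) *
      (starRingEnd ℂ) (fixCard (ρ γ : Matrix (Fin ℓ) (Fin ℓ) ℤ) q : ℂ) =
      (-1) ^ ℓ * (V.character γ * ((∏ i : Fin ℓ, if (i : ℕ) < r γ then
        (Int.gcd (d γ i) (q : ℤ) : ℂ) else 1) * (-(q : ℂ)) ^ (ℓ - r γ))) := by
    rw [hdet γ, fixCard_eq_prod_gcd (hS γ) (hT γ) (hSNF γ), Complex.conj_natCast, Nat.cast_prod,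
      mul_left_comm, ← neg_one_pow_mul_prod_gcd (hr γ) (hzero γ)]
    push_cast
    ring
  simp_rw [hterm, ← Finset.mul_sum]
  ring

/-- Reciprocity: Define the reciprocity character
`δ_ρ(γ) = det R_γ`. Then `δ_ρ(γ) = (−1)^{rank(R_γ − I)}`, `δ_ρ` is
multiplicative (hence a 1-dimensional, irreducible character), and for every
irreducible character `χ` the multiplicities satisfy
`m(χ ⊗ δ_ρ; q) = (−1)^ℓ m(χ; −q)`, where `m(χ; −q)` denotes the extension of
the quasi-polynomial `m(χ; ·)` to negative arguments, i.e. the explicit formula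
`(1/#Γ) Σ_γ χ(γ) (∏_j gcd(e_{γ,j}, q)) (−q)^{ℓ−r(γ)}` (note
`gcd(e, −q) = gcd(e, q)`). Ranks `r γ` and elementary divisors `d γ j` of
`R_γ − I` are encoded by Smith normal forms. -/
theorem stmt14 (ℓ : ℕ) (Γ : Type) [Group Γ] [Fintype Γ]
    (ρ : Γ →* Matrix.GeneralLinearGroup (Fin ℓ) ℤ) (hρ : Function.Injective ρ)
    (V : FDRep ℂ Γ) (hV : CategoryTheory.Simple V)
    (r : Γ → ℕ) (hr : ∀ γ, r γ ≤ ℓ)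
    (S T : Γ → Matrix (Fin ℓ) (Fin ℓ) ℤ)
    (hS : ∀ γ, IsUnit (S γ).det) (hT : ∀ γ, IsUnit (T γ).det)
    (d : Γ → Fin ℓ → ℤ)
    (hSNF : ∀ γ, S γ * ((ρ γ : Matrix (Fin ℓ) (Fin ℓ) ℤ) - 1) * T γ = Matrix.diagonal (d γ))
    (hpos : ∀ γ, ∀ i : Fin ℓ, (i : ℕ) < r γ → 0 < d γ i)
    (hzero : ∀ γ, ∀ i : Fin ℓ, r γ ≤ (i : ℕ) → d γ i = 0)
    (hdvd : ∀ γ, ∀ i j : Fin ℓ, i ≤ j → (j : ℕ) < r γ → d γ i ∣ d γ j) :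
    (∀ γ : Γ, (ρ γ : Matrix (Fin ℓ) (Fin ℓ) ℤ).det = (-1 : ℤ) ^ (r γ))
    ∧ (∀ γ η : Γ, ((ρ (γ * η) : Matrix (Fin ℓ) (Fin ℓ) ℤ).det : ℤ)
        = (ρ γ : Matrix (Fin ℓ) (Fin ℓ) ℤ).det * (ρ η : Matrix (Fin ℓ) (Fin ℓ) ℤ).det)
    ∧ (∀ q : ℕ, 0 < q →
        (Fintype.card Γ : ℂ)⁻¹ * ∑ γ : Γ,
            (V.character γ * ((ρ γ : Matrix (Fin ℓ) (Fin ℓ) ℤ).det : ℂ)) *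
              (starRingEnd ℂ) ((fixCard (ρ γ : Matrix (Fin ℓ) (Fin ℓ) ℤ) q : ℂ))
          = (-1 : ℂ) ^ ℓ * ((Fintype.card Γ : ℂ)⁻¹ * ∑ γ : Γ, V.character γ *
              ((∏ i : Fin ℓ, if (i : ℕ) < r γ then (Int.gcd (d γ i) (q : ℤ) : ℂ) else 1)
                * (-(q : ℂ)) ^ (ℓ - r γ)))) :=
  stmt14_general ℓ Γ ρ V r hr S T hS hT d hSNF hpos hzero
end
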